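/- arXiv:0912.0888 — 2 statements merged into one kernel-verified Lean document; each statement's English description precedes it below -/
import Mathlib

section
/- Let Ψ(λ) = ∫₀^a |e^{2πiλt} - 1|² t^{-1-2s} dt for fixed a > 0 and s ∈ (0,1). Then there exist constants c₁, c₂ > 0 (depending on a, s) such that Ψ(λ) ≤ c₂ |λ|^{2s} for all λ ∈ ℝ, and Ψ(λ) ≥ c₁ |λ|^{2s} whenever |λ| ≥ 1/a. -/
/-!
Substituting `x = |λ| t` gives `Ψ(λ) = |λ|^{2s} ∫₀^{|λ|a} 4 sin²(πx) x^{-1-2s} dx`. The new integrand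
is nonnegative and integrable on `(0, ∞)`, being `O(x^{1-2s})` at `0` and `O(x^{-1-2s})` at `∞`,
so one may take `c₂ = ∫₀^∞` and `c₁ = ∫₀^1` of it.
-/

open Real MeasureTheory Set

lemma norm_exp_ofReal_mul_I_sub_one_sq (x : ℝ) :
    ‖Complex.exp (x * Complex.I) - 1‖ ^ 2 = 4 * sin (x / 2) ^ 2 := by
  rw [mul_comm, Complex.norm_exp_I_mul_ofReal_sub_one, Real.norm_eq_abs, sq_abs]
  ring

noncomputable def sinSqKernel (s x : ℝ) : ℝ := 4 * sin (π * x) ^ 2 * x ^ (-1 - 2 * s)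

section sinSqKernel

variable {s x : ℝ}

lemma measurable_sinSqKernel : Measurable (sinSqKernel s) := by
  unfold sinSqKernel
  fun_prop

lemma sinSqKernel_nonneg (hx : 0 ≤ x) : 0 ≤ sinSqKernel s x := by
  have := rpow_nonneg hx (-1 - 2 * s)
  unfold sinSqKernel
  positivity

lemma sinSqKernel_pos (hx0 : 0 < x) (hx1 : x < 1) : 0 < sinSqKernel s x := by
  have : 0 < sin (π * x) := sin_pos_of_pos_of_lt_pi (by positivity) (by nlinarith [pi_pos])
  unfold sinSqKernel
  positivity

lemma sinSqKernel_le_rpow (hx : 0 < x) : sinSqKernel s x ≤ 4 * π ^ 2 * x ^ (1 - 2 * s) := by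
  have hpow : x ^ (1 - 2 * s) = x ^ 2 * x ^ (-1 - 2 * s) := by
    rw [← rpow_natCast, ← rpow_add hx]
    ring_nf
  calc sinSqKernel s x ≤ 4 * (π * x) ^ 2 * x ^ (-1 - 2 * s) := by
        unfold sinSqKernel
        have := rpow_nonneg hx.le (-1 - 2 * s)
        gcongr 4 * ?_ * _
        exact sin_sq_le_sq
    _ = 4 * π ^ 2 * x ^ (1 - 2 * s) := by rw [hpow]; ring

lemma sinSqKernel_le_four_mul_rpow (hx : 0 ≤ x) : sinSqKernel s x ≤ 4 * x ^ (-1 - 2 * s) := by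
  have := rpow_nonneg hx (-1 - 2 * s)
  unfold sinSqKernel
  nlinarith [sin_sq_le_one (π * x)]

lemma integrableOn_sinSqKernel_Ioi (hs : 0 < s) (hs1 : s < 1) :
    IntegrableOn (sinSqKernel s) (Ioi 0) := by
  rw [← Ioc_union_Ioi_eq_Ioi zero_le_one]
  refine IntegrableOn.union ?_ ?_
  · have hg : IntegrableOn (fun x : ℝ => 4 * π ^ 2 * x ^ (1 - 2 * s)) (Ioc 0 1) :=
      (intervalIntegral.intervalIntegrable_rpow' (by linarith)).1.const_mul _
    refine Integrable.mono' hg measurable_sinSqKernel.aestronglyMeasurable ?_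
    filter_upwards [ae_restrict_mem measurableSet_Ioc] with x hx
    rw [norm_of_nonneg (sinSqKernel_nonneg hx.1.le)]
    exact sinSqKernel_le_rpow hx.1
  · have hg : IntegrableOn (fun x : ℝ => 4 * x ^ (-1 - 2 * s)) (Ioi 1) :=
      (integrableOn_Ioi_rpow_of_lt (by linarith) one_pos).const_mul _
    refine Integrable.mono' hg measurable_sinSqKernel.aestronglyMeasurable ?_
    filter_upwards [ae_restrict_mem measurableSet_Ioi] with x (hx : 1 < x)
    rw [norm_of_nonneg (sinSqKernel_nonneg (by linarith))]
    exact sinSqKernel_le_four_mul_rpow (by linarith)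

lemma setIntegral_sinSqKernel_mono (hs : 0 < s) (hs1 : s < 1) {S T : Set ℝ} (hST : S ⊆ T)
    (hT : T ⊆ Ioi 0) (hTm : MeasurableSet T) :
    ∫ x in S, sinSqKernel s x ≤ ∫ x in T, sinSqKernel s x :=
  setIntegral_mono_set ((integrableOn_sinSqKernel_Ioi hs hs1).mono_set hT)
    ((ae_restrict_iff' hTm).2 (Filter.Eventually.of_forall fun _ hx =>
      sinSqKernel_nonneg (hT hx).le)) hST.eventuallyLE

lemma setIntegral_sinSqKernel_Ioc_zero_one_pos (hs : 0 < s) (hs1 : s < 1) :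
    0 < ∫ x in Ioc 0 1, sinSqKernel s x := by
  rw [← intervalIntegral.integral_of_le zero_le_one]
  refine intervalIntegral.intervalIntegral_pos_of_pos_on ?_
    (fun x hx => sinSqKernel_pos hx.1 hx.2) zero_lt_one
  exact (intervalIntegrable_iff_integrableOn_Ioc_of_le zero_le_one).2
    ((integrableOn_sinSqKernel_Ioi hs hs1).mono_set Ioc_subset_Ioi_self)

lemma norm_exp_sub_one_sq_mul_rpow_eq (L : ℝ) {t : ℝ} (ht : 0 ≤ t) :
    ‖Complex.exp (((2 * π * L * t : ℝ) : ℂ) * Complex.I) - 1‖ ^ 2 * t ^ (-(1:ℝ) - 2 * s)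
      = |L| ^ (2 * s) * (|L| * sinSqKernel s (|L| * t)) := by
  rw [norm_exp_ofReal_mul_I_sub_one_sq, show 2 * π * L * t / 2 = π * L * t by ring]
  rcases eq_or_ne L 0 with rfl | hL
  · simp
  have hL' : 0 < |L| := abs_pos.2 hL
  have hsin : sin (π * L * t) ^ 2 = sin (π * (|L| * t)) ^ 2 := by
    rcases abs_choice L with h | h <;> rw [h]
    · ring_nf
    · rw [show π * (-L * t) = -(π * L * t) by ring, sin_neg, neg_sq]
  have hpow : |L| ^ (2 * s) * (|L| * |L| ^ (-1 - 2 * s)) = 1 := by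
    rw [mul_comm |L|, ← rpow_add_one hL'.ne', ← rpow_add hL']
    ring_nf
    exact rpow_zero _
  rw [hsin, sinSqKernel, mul_rpow hL'.le ht]
  linear_combination (4 * sin (π * (|L| * t)) ^ 2 * t ^ (-1 - 2 * s)) * hpow.symm

lemma setIntegral_norm_exp_sub_one_sq_mul_rpow_eq (L : ℝ) {a : ℝ} (ha : 0 ≤ a) :
    ∫ t in Ioc 0 a,
        ‖Complex.exp (((2 * π * L * t : ℝ) : ℂ) * Complex.I) - 1‖ ^ 2 * t ^ (-(1:ℝ) - 2 * s)
      = |L| ^ (2 * s) * ∫ x in Ioc 0 (|L| * a), sinSqKernel s x := by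
  rw [setIntegral_congr_fun measurableSet_Ioc
      (fun t ht => norm_exp_sub_one_sq_mul_rpow_eq L ht.1.le), integral_const_mul,
    ← intervalIntegral.integral_of_le ha, ← intervalIntegral.integral_of_le (by positivity),
    intervalIntegral.integral_const_mul, ← smul_eq_mul (a := |L|),
    intervalIntegral.smul_integral_comp_mul_left, mul_zero]

end sinSqKernel

/-- Two-sided asymptotics for `Ψ(λ) = ∫₀^a |e^{2πiλt} - 1|² t^{-1-2s} dt`:
`Ψ(λ) ≤ c₂|λ|^{2s}` for all `λ`, and `Ψ(λ) ≥ c₁|λ|^{2s}` when `|λ| ≥ 1/a`. -/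
theorem stmt_8 (a s : ℝ) (ha : 0 < a) (hs : 0 < s) (hs1 : s < 1) :
    ∃ c₁ > 0, ∃ c₂ > 0,
      (∀ L : ℝ,
        (∫ t in Set.Ioc (0:ℝ) a,
            ‖Complex.exp (((2*Real.pi*L*t : ℝ) : ℂ) * Complex.I) - 1‖ ^ 2
              * t ^ (-(1:ℝ) - 2*s))
          ≤ c₂ * |L| ^ (2*s)) ∧
      (∀ L : ℝ, 1/a ≤ |L| →
        c₁ * |L| ^ (2*s)
          ≤ ∫ t in Set.Ioc (0:ℝ) a,
              ‖Complex.exp (((2*Real.pi*L*t : ℝ) : ℂ) * Complex.I) - 1‖ ^ 2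
                * t ^ (-(1:ℝ) - 2*s)) := by
  have hc₁ := setIntegral_sinSqKernel_Ioc_zero_one_pos hs hs1
  have hc₁₂ := setIntegral_sinSqKernel_mono hs hs1 Ioc_subset_Ioi_self subset_rfl
    measurableSet_Ioi (S := Ioc 0 1)
  refine ⟨_, hc₁, _, hc₁.trans_le hc₁₂, fun L => ?_, fun L hL => ?_⟩
  · rw [setIntegral_norm_exp_sub_one_sq_mul_rpow_eq L ha.le, mul_comm (|L| ^ _)]
    exact mul_le_mul_of_nonneg_right
      (setIntegral_sinSqKernel_mono hs hs1 Ioc_subset_Ioi_self subset_rfl measurableSet_Ioi)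
      (rpow_nonneg (abs_nonneg L) _)
  · have hLa : 1 ≤ |L| * a := (div_le_iff₀ ha).1 hL
    rw [setIntegral_norm_exp_sub_one_sq_mul_rpow_eq L ha.le, mul_comm (|L| ^ _)]
    exact mul_le_mul_of_nonneg_right
      (setIntegral_sinSqKernel_mono hs hs1 (Ioc_subset_Ioc_right hLa) Ioc_subset_Ioi_self
        measurableSet_Ioc)
      (rpow_nonneg (abs_nonneg L) _)
end

section
/- Let N ≥ 2 and suppose a Hilbert space norm decomposition: let (f^n) be a sequence in a Hilbert space H with norms bounded by 1, converging weakly to f⁰, and suppose that for each R > 1 the norms split as |f^n - f⁰|²_{L²} ≲ Σ_{|v_i| ≤ R} ⟨v_i⟩⁻¹|f^n_i - f⁰_i|²_{L²} + R^{-ρ} |f^n - f⁰|²_H with ρ > 0, where for each fixed i the localized pieces f^n_i converge in L² to f⁰_i. Then f^n → f⁰ strongly in L². (Compact embedding of N^{s,γ} into L² via localization.) -/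
/-!
Fix a radius `R`. The splitting bounds `n2 (f n - f0) ^ 2` by `K` times a finite sum of localized
errors, which tends to `0` as `n → ∞`, plus a tail term at most `|K| R^{-ρ} (1 + ‖f0‖)²`,
uniformly in `n` because the sequence is bounded. Letting first `n → ∞` and then `R → ∞`
gives `n2 (f n - f0) → 0`.
-/

open Filter Topology

theorem tendsto_zero_of_le_add_of_tendsto_zero {α β : Type*} {l : Filter α} {l' : Filter β}
    [l'.NeBot] {u : α → ℝ} {S : β → α → ℝ} {T : β → ℝ} (hu : ∀ n, 0 ≤ u n)
    (hS : ∀ R, Tendsto (S R) l (𝓝 0)) (hT : Tendsto T l' (𝓝 0))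
    (hle : ∀ᶠ R in l', ∀ n, u n ≤ S R n + T R) : Tendsto u l (𝓝 0) := by
  refine tendsto_order.2 ⟨fun b hb => .of_forall fun n => hb.trans_le (hu n), fun b hb => ?_⟩
  obtain ⟨R, hTR, hleR⟩ := ((hT.eventually (gt_mem_nhds (half_pos hb))).and hle).exists
  filter_upwards [(hS R).eventually (gt_mem_nhds (half_pos hb))] with n hSn
  linarith [hleR n]

theorem Filter.Tendsto.of_sq_tendsto_zero {α : Type*} {l : Filter α} {u : α → ℝ}
    (h : Tendsto (fun n => u n ^ 2) l (𝓝 0)) : Tendsto u l (𝓝 0) := by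
  refine tendsto_zero_iff_norm_tendsto_zero.2 ?_
  simpa [Real.sqrt_sq_eq_abs] using h.sqrt

theorem norm_sub_sq_le_of_norm_le_one {E : Type*} [SeminormedAddCommGroup E] {x y : E}
    (hx : ‖x‖ ≤ 1) : ‖x - y‖ ^ 2 ≤ (1 + ‖y‖) ^ 2 := by
  gcongr
  linarith [norm_sub_le x y]

theorem mul_le_abs_mul_of_nonneg_of_le {K x X : ℝ} (hx : 0 ≤ x) (hxX : x ≤ X) :
    K * x ≤ |K| * X :=
  calc K * x ≤ |K * x| := le_abs_self _
    _ = |K| * x := by rw [abs_mul, abs_of_nonneg hx]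
    _ ≤ |K| * X := by gcongr

theorem stmt_19_general {H : Type*} [NormedAddCommGroup H]
    (n2 : H → ℝ)
    (f : ℕ → H) (f0 : H)
    (hb : ∀ n, ‖f n‖ ≤ 1)
    (v : ℕ → ℝ) (a : ℕ → ℕ → ℝ)
    (hfin : ∀ R : ℝ, {i : ℕ | |v i| ≤ R}.Finite)
    (haconv : ∀ i, Tendsto (fun n => a i n) atTop (nhds 0))
    (ρ : ℝ) (hρ : 0 < ρ) (K : ℝ)
    (hsplit : ∀ R : ℝ, 1 < R → ∀ n,
      (n2 (f n - f0))^2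
        ≤ K * ((∑ i ∈ (hfin R).toFinset, (Real.sqrt (1 + |v i|^2))⁻¹ * a i n)
            + R ^ (-ρ) * ‖f n - f0‖^2)) :
    Tendsto (fun n => n2 (f n - f0)) atTop (nhds 0) := by
  set C := 1 + ‖f0‖
  have hlocal : ∀ R, Tendsto (fun n => K * ∑ i ∈ (hfin R).toFinset,
      (Real.sqrt (1 + |v i| ^ 2))⁻¹ * a i n) atTop (𝓝 0) := fun R => by
    simpa using (tendsto_finsetSum _ fun i _ => (haconv i).const_mul _).const_mul K
  have htail : Tendsto (fun R : ℝ => |K| * (R ^ (-ρ) * C ^ 2)) atTop (𝓝 0) := by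
    simpa using ((tendsto_rpow_neg_atTop hρ).mul_const (C ^ 2)).const_mul |K|
  refine Tendsto.of_sq_tendsto_zero (tendsto_zero_of_le_add_of_tendsto_zero (fun n => sq_nonneg _)
    hlocal htail ?_)
  filter_upwards [eventually_gt_atTop 1] with R hR n
  have hRρ : 0 ≤ R ^ (-ρ) := Real.rpow_nonneg (by linarith) _
  calc n2 (f n - f0) ^ 2
      ≤ K * ((∑ i ∈ (hfin R).toFinset, (Real.sqrt (1 + |v i| ^ 2))⁻¹ * a i n)
          + R ^ (-ρ) * ‖f n - f0‖ ^ 2) := hsplit R hR n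
    _ ≤ _ := by
      rw [mul_add]
      exact add_le_add_right (mul_le_abs_mul_of_nonneg_of_le (by positivity)
        (mul_le_mul_of_nonneg_left (norm_sub_sq_le_of_norm_le_one (hb n)) hRρ)) _

/-- Abstract compactness lemma underlying the compact embedding `N^{s,γ} ↪ L²`:
a sequence bounded by 1 in the Hilbert space `H` which converges weakly, whose
localized pieces converge in `L²`, and which satisfies the weighted localization
splitting of the `L²` norm with tail weight `R^{-ρ}`, converges strongly in `L²`. -/
theorem stmt_19 {H : Type*} [NormedAddCommGroup H] [InnerProductSpace ℝ H]
    (N : ℕ) (hN : 2 ≤ N)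
    (n2 : H → ℝ) (hn2 : ∀ x, 0 ≤ n2 x)
    (f : ℕ → H) (f0 : H)
    (hb : ∀ n, ‖f n‖ ≤ 1)
    (hweak : ∀ φ : H →L[ℝ] ℝ, Tendsto (fun n => φ (f n)) atTop (nhds (φ f0)))
    (v : ℕ → ℝ) (a : ℕ → ℕ → ℝ)
    (hfin : ∀ R : ℝ, {i : ℕ | |v i| ≤ R}.Finite)
    (ha : ∀ i n, 0 ≤ a i n)
    (haconv : ∀ i, Tendsto (fun n => a i n) atTop (nhds 0))
    (ρ : ℝ) (hρ : 0 < ρ) (K : ℝ)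
    (hsplit : ∀ R : ℝ, 1 < R → ∀ n,
      (n2 (f n - f0))^2
        ≤ K * ((∑ i ∈ (hfin R).toFinset, (Real.sqrt (1 + |v i|^2))⁻¹ * a i n)
            + R ^ (-ρ) * ‖f n - f0‖^2)) :
    Tendsto (fun n => n2 (f n - f0)) atTop (nhds 0) :=
  stmt_19_general n2 f f0 hb v a hfin haconv ρ hρ K hsplit
end
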